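/- arXiv:2212.09181 — 9 statements merged into one kernel-verified Lean document; each statement's English description precedes it below -/
import Mathlib

section
/- Let G be a connected finite simple graph such that c_G(S) = |S| + 1 for every cut set S of G (i.e., G is combinatorially unmixed). Then for any subset S ⊆ V(G), the following are equivalent: (1) S is a cut set of G; (2) c_G(S) = |S| + 1; (3) c_G(S) ≥ |S| + 1. -/
open SimpleGraph Finset

variable {V : Type*}

/-- Number of connected components of the induced subgraph on the complement of `S`. -/
noncomputable def ncomp (G : SimpleGraph V) (S : Finset V) : ℕ :=
  Nat.card ((G.induce {v | v ∉ S}).ConnectedComponent)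

/-- `S` is a cut set of `G`. -/
def cutSet [DecidableEq V] (G : SimpleGraph V) (S : Finset V) : Prop :=
  S = ∅ ∨ ∀ i ∈ S, ncomp G (S.erase i) < ncomp G S

/-- `G` is combinatorially unmixed. -/
def unmixed [DecidableEq V] (G : SimpleGraph V) : Prop :=
  G.Connected ∧ ∀ S : Finset V, cutSet G S → ncomp G S = S.card + 1

/-- `G` is accessible. -/
def accessible [DecidableEq V] (G : SimpleGraph V) : Prop :=
  unmixed G ∧ ∀ S : Finset V, cutSet G S → S ≠ ∅ → ∃ s ∈ S, cutSet G (S.erase s)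

/-- A block: connected with no cut vertices. -/
def isBlock [DecidableEq V] (G : SimpleGraph V) : Prop :=
  G.Connected ∧ ∀ v : V, ¬ cutSet G {v}

/-- The graph obtained from `B` by attaching a whisker (pendant leaf) at each `f i`. -/
def whisker {k : ℕ} (B : SimpleGraph V) (f : Fin k → V) : SimpleGraph (V ⊕ Fin k) :=
  SimpleGraph.fromRel (fun x y => match x, y with
    | Sum.inl a, Sum.inl b => B.Adj a b
    | Sum.inl a, Sum.inr i => a = f i
    | _, _ => False)

/-- A free vertex: a vertex contained in a unique maximal clique. -/
def freeVertex (G : SimpleGraph V) (v : V) : Prop :=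
  ∃! s : Set V, v ∈ s ∧ G.IsClique s ∧ ∀ t, G.IsClique t → s ⊆ t → s = t

theorem cutSet_tfae [Fintype V] [DecidableEq V] (G : SimpleGraph V) (hG : unmixed G)
    (S : Finset V) :
    (cutSet G S ↔ ncomp G S = S.card + 1) ∧
    (cutSet G S ↔ S.card + 1 ≤ ncomp G S) := by
  have key : ∀ S : Finset V, S.card + 1 ≤ ncomp G S → cutSet G S := by
    intro S
    induction S using Finset.strongInduction with
    | _ S ih =>
      intro hS
      by_contra h
      unfold cutSet at h
      push_neg at h
      obtain ⟨hne, i, hi, hle⟩ := h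
      have hcard : 1 ≤ S.card := Finset.card_pos.mpr ⟨i, hi⟩
      have hce : (S.erase i).card = S.card - 1 := Finset.card_erase_of_mem hi
      have h1 : (S.erase i).card + 1 ≤ ncomp G (S.erase i) := by omega
      have hc := ih (S.erase i) (Finset.erase_ssubset hi) h1
      have := hG.2 _ hc
      omega
  constructor
  · constructor
    · exact hG.2 S
    · intro h; exact key S h.ge
  · constructor
    · intro h; exact (hG.2 S h).ge
    · exact key S
end

section
/- Let G be a connected combinatorially unmixed graph, S a cut set of G, and v ∈ V(G) \ S. Then S ∪ {v} is a cut set of G if and only if v is a cut vertex of the graph G \ S (i.e., removing v from G \ S increases the number of connected components). -/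
open SimpleGraph Finset

variable {V : Type*}

lemma ncomp_le_card_add_one [Fintype V] [DecidableEq V] (G : SimpleGraph V)
    (hG : unmixed G) (T : Finset V) : ncomp G T ≤ T.card + 1 := by
  induction T using Finset.strongInduction with
  | _ T ih =>
    by_cases hc : cutSet G T
    · exact (hG.2 T hc).le
    · unfold cutSet at hc
      push_neg at hc
      obtain ⟨hne, i, hi, hle⟩ := hc
      calc ncomp G T ≤ ncomp G (T.erase i) := hle
        _ ≤ (T.erase i).card + 1 := ih _ (Finset.erase_ssubset hi)
        _ ≤ T.card + 1 := by
            have := Finset.card_erase_lt_of_mem hi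
            omega

theorem cutSet_insert_iff_cutVertex [Fintype V] [DecidableEq V] (G : SimpleGraph V)
    (hG : unmixed G) (S : Finset V) (hS : cutSet G S) (v : V) (hv : v ∉ S) :
    cutSet G (insert v S) ↔ ncomp G S < ncomp G (insert v S) := by
  constructor
  · intro h
    rcases h with h | h
    · exact absurd h (Finset.insert_ne_empty v S)
    · have := h v (Finset.mem_insert_self v S)
      rwa [Finset.erase_insert hv] at this
  · intro h
    right
    intro i hi
    have hSc : ncomp G S = S.card + 1 := hG.2 S hS
    have hle : ncomp G ((insert v S).erase i) ≤ ((insert v S).erase i).card + 1 :=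
      ncomp_le_card_add_one G hG _
    have hcard : ((insert v S).erase i).card = S.card := by
      rw [Finset.card_erase_of_mem hi, Finset.card_insert_of_notMem hv]; omega
    omega
end

section
/- Let B be a finite simple connected graph with vertex set of size n ≥ 2 having no cut vertices (a block), let W ⊆ V(B) with |W| = n (i.e., a whisker is attached to every vertex of B), and let G be the graph obtained from B by attaching a pendant edge {v, f_v} with a new leaf f_v for each v ∈ W. If G is combinatorially unmixed, then B is a complete graph. -/
open SimpleGraph Finset

variable {V : Type*}

section Aux

lemma whisker_adj_inl_inl {k} (B : SimpleGraph V) (f : Fin k → V) (u w : V) :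
    (whisker B f).Adj (Sum.inl u) (Sum.inl w) ↔ B.Adj u w := by
  simp only [whisker, fromRel_adj]
  constructor
  · rintro ⟨-, h | h⟩
    · exact h
    · exact h.symm
  · intro h
    exact ⟨by simp [h.ne], Or.inl h⟩

lemma whisker_adj_inl_inr {k} (B : SimpleGraph V) (f : Fin k → V) (u : V) (i : Fin k) :
    (whisker B f).Adj (Sum.inl u) (Sum.inr i) ↔ u = f i := by
  simp [whisker, fromRel_adj]

lemma whisker_adj_inr_inl {k} (B : SimpleGraph V) (f : Fin k → V) (u : V) (i : Fin k) :
    (whisker B f).Adj (Sum.inr i) (Sum.inl u) ↔ u = f i := by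
  simp [whisker, fromRel_adj]

lemma whisker_not_adj_inr_inr {k} (B : SimpleGraph V) (f : Fin k → V) (i j : Fin k) :
    ¬ (whisker B f).Adj (Sum.inr i) (Sum.inr j) := by
  simp [whisker, fromRel_adj]

lemma walk_closed {α : Type*} {H : SimpleGraph α} {C : Set α}
    (hC : ∀ x ∈ C, ∀ y, H.Adj x y → y ∈ C) :
    ∀ {x y : α}, H.Walk x y → x ∈ C → y ∈ C := by
  intro x y w
  induction w with
  | nil => exact id
  | cons h _ ih => exact fun hx => ih (hC _ hx _ h)

lemma reach_closed {α : Type*} {H : SimpleGraph α} {C : Set α}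
    (hC : ∀ x ∈ C, ∀ y, H.Adj x y → y ∈ C) {x y : α} (hx : x ∈ C)
    (h : H.Reachable x y) : y ∈ C := by
  obtain ⟨w⟩ := h
  exact walk_closed hC w hx

end Aux

theorem block_all_whiskers_unmixed_complete [Fintype V] [DecidableEq V] {n : ℕ}
    (hn : 2 ≤ n) (hcard : Fintype.card V = n) (B : SimpleGraph V) (hB : isBlock B)
    (f : Fin n → V) (hf : Function.Bijective f) (hu : unmixed (whisker B f)) :
    ∀ a b : V, a ≠ b → B.Adj a b := by
  classical
  intro a b hab
  by_contra hnadj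
  set e := Equiv.ofBijective f hf with he
  have hfe : ∀ v : V, f (e.symm v) = v := fun v => e.apply_symm_apply v
  have hesinj : Function.Injective e.symm := e.symm.injective
  set Na : Finset V := B.neighborFinset a with hNa
  set S : Finset (V ⊕ Fin n) := Na.image Sum.inl with hSdef
  have hinlS : ∀ v : V, Sum.inl v ∈ S ↔ B.Adj a v := by
    intro v
    simp [hSdef, hNa]
  have hinrS : ∀ j : Fin n, (Sum.inr j : V ⊕ Fin n) ∉ S := by
    intro j hj
    simp [hSdef] at hj
  have haS : (Sum.inl a : V ⊕ Fin n) ∉ S := by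
    rw [hinlS]; exact B.irrefl
  have hbS : (Sum.inl b : V ⊕ Fin n) ∉ S := by
    rw [hinlS]; exact hnadj
  set G := whisker B f with hG
  set T : Set (V ⊕ Fin n) := {x | x ∉ S} with hT
  set H : SimpleGraph T := G.induce T with hH
  have hHadj : ∀ x y : T, H.Adj x y → G.Adj x.1 y.1 := by
    intro x y h
    exact h
  -- the connected component of a leaf whose base vertex has been removed is a singleton
  have hleaf : ∀ (j : Fin n), f j ∈ Na → ∀ (hj : (Sum.inr j : V ⊕ Fin n) ∈ T) (z : T),
      H.Reachable ⟨Sum.inr j, hj⟩ z → z.1 = Sum.inr j := by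
    intro j hjNa hj z hr
    have := reach_closed (C := {z : T | z.1 = Sum.inr j}) ?_ (by exact rfl) hr
    · exact this
    · rintro ⟨x, hxT⟩ hx ⟨y, hyT⟩ hadj
      have hadj' : G.Adj x y := hHadj _ _ hadj
      simp only [Set.mem_setOf_eq] at hx ⊢
      subst hx
      cases y with
      | inl u =>
        exfalso
        rw [hG, whisker_adj_inr_inl] at hadj'
        exact hyT (by rw [hadj']; simp [hSdef, hjNa])
      | inr i =>
        exact absurd hadj' (by rw [hG]; exact whisker_not_adj_inr_inr B f j i)
  -- the connected component of `a` is contained in `{inl a, inr (e.symm a)}`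
  have hCa : ∀ x ∈ {z : T | z.1 = Sum.inl a ∨ z.1 = Sum.inr (e.symm a)}, ∀ y,
      H.Adj x y → y ∈ {z : T | z.1 = Sum.inl a ∨ z.1 = Sum.inr (e.symm a)} := by
    rintro ⟨x, hxT⟩ hx ⟨y, hyT⟩ hadj
    have hadj' : G.Adj x y := hHadj _ _ hadj
    simp only [Set.mem_setOf_eq] at hx ⊢
    rcases hx with hx | hx <;> subst hx
    · cases y with
      | inl u =>
        exfalso
        rw [hG, whisker_adj_inl_inl] at hadj'
        exact hyT (by rw [hinlS]; exact hadj')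
      | inr i =>
        rw [hG, whisker_adj_inl_inr] at hadj'
        right
        have : e.symm a = i := by
          apply hf.1
          rw [hfe]; exact hadj'
        rw [this]
    · cases y with
      | inl u =>
        rw [hG, whisker_adj_inr_inl, hfe] at hadj'
        left
        rw [hadj']
      | inr i =>
        exact absurd hadj' (by rw [hG]; exact whisker_not_adj_inr_inr B f _ i)
  have haT : (Sum.inl a : V ⊕ Fin n) ∈ T := haS
  have hbT : (Sum.inl b : V ⊕ Fin n) ∈ T := hbS
  -- Part A : ncomp G S ≥ S.card + 2
  have hA : S.card + 2 ≤ ncomp G S := by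
    set g : ({v // v ∈ Na} ⊕ Bool) → H.ConnectedComponent := fun x =>
      match x with
      | Sum.inl ⟨v, _⟩ => H.connectedComponentMk ⟨Sum.inr (e.symm v), hinrS _⟩
      | Sum.inr false => H.connectedComponentMk ⟨Sum.inl a, haT⟩
      | Sum.inr true => H.connectedComponentMk ⟨Sum.inl b, hbT⟩
      with hg
    have hNaes : ∀ v : V, v ∈ Na → f (e.symm v) ∈ Na := by
      intro v hv; rwa [hfe]
    have hginj : Function.Injective g := by
      rintro (⟨v, hv⟩ | bv) (⟨w, hw⟩ | bw) hgeq
      · simp only [hg] at hgeq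
        have hr := ConnectedComponent.exact hgeq
        have := hleaf (e.symm v) (hNaes v hv) _ _ hr
        have : e.symm w = e.symm v := by
          simpa using this
        have : w = v := hesinj this
        subst this; rfl
      · exfalso
        simp only [hg] at hgeq
        cases bw <;> {
          have hr := ConnectedComponent.exact hgeq
          have := hleaf (e.symm v) (hNaes v hv) _ _ hr
          simp at this
        }
      · exfalso
        simp only [hg] at hgeq
        cases bv <;> {
          have hr := (ConnectedComponent.exact hgeq).symm
          have := hleaf (e.symm w) (hNaes w hw) _ _ hr
          simp at this
        }
      · cases bv <;> cases bw <;> first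
          | rfl
          | · exfalso
              simp only [hg] at hgeq
              have hr : H.Reachable ⟨Sum.inl a, haT⟩ ⟨Sum.inl b, hbT⟩ := by
                first
                  | exact ConnectedComponent.exact hgeq
                  | exact (ConnectedComponent.exact hgeq).symm
              have := reach_closed hCa (by simp) hr
              simp only [Set.mem_setOf_eq] at this
              rcases this with h | h
              · exact hab (Sum.inl.inj h).symm
              · exact absurd h (by simp)
    have hle := Nat.card_le_card_of_injective g hginj
    have hdom : Nat.card ({v // v ∈ Na} ⊕ Bool) = Na.card + 2 := by
      rw [Nat.card_sum, Nat.card_eq_finsetCard]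
      simp
    have hScard : S.card = Na.card := Finset.card_image_of_injective Na Sum.inl_injective
    have : ncomp G S = Nat.card H.ConnectedComponent := rfl
    omega
  -- Part B : S is a cut set of G
  have hcut : cutSet G S := by
    right
    intro i hi
    obtain ⟨v, hv, rfl⟩ := Finset.mem_image.1 hi
    have hvadj : B.Adj a v := by rwa [hNa, B.mem_neighborFinset] at hv
    set S' : Finset (V ⊕ Fin n) := S.erase (Sum.inl v) with hS'
    set T' : Set (V ⊕ Fin n) := {x | x ∉ S'} with hT'
    set H' : SimpleGraph T' := G.induce T' with hH'
    have hsub : ∀ x : V ⊕ Fin n, x ∈ T → x ∈ T' := by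
      intro x hx hx'
      exact hx (Finset.mem_of_mem_erase hx')
    have hvT' : (Sum.inl v : V ⊕ Fin n) ∈ T' := by
      intro hmem
      exact (Finset.mem_erase.1 hmem).1 rfl
    have haT' : (Sum.inl a : V ⊕ Fin n) ∈ T' := hsub _ haT
    set φ : H →g H' := ⟨fun x => ⟨x.1, hsub _ x.2⟩, fun h => h⟩ with hφ
    set F : H.ConnectedComponent → H'.ConnectedComponent := ConnectedComponent.map φ with hF
    have hFmk : ∀ (x : T), F (H.connectedComponentMk x) = H'.connectedComponentMk ⟨x.1, hsub _ x.2⟩ := by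
      intro x; rfl
    -- adjacency of inl a and inl v in H'
    have hav' : H'.Adj ⟨Sum.inl a, haT'⟩ ⟨Sum.inl v, hvT'⟩ := by
      show G.Adj (Sum.inl a) (Sum.inl v)
      rw [hG, whisker_adj_inl_inl]
      exact hvadj
    have hsurj : Function.Surjective F := by
      intro c'
      induction c' using SimpleGraph.ConnectedComponent.ind with
      | _ x =>
        by_cases hx : x.1 ∈ S
        · have hxv : x.1 = Sum.inl v := by
            by_contra hne
            exact x.2 (Finset.mem_erase.2 ⟨hne, hx⟩)
          refine ⟨H.connectedComponentMk ⟨Sum.inl a, haT⟩, ?_⟩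
          rw [hFmk]
          apply ConnectedComponent.sound
          have hxeq : x = ⟨Sum.inl v, hvT'⟩ := Subtype.ext hxv
          rw [hxeq]
          exact hav'.reachable
        · refine ⟨H.connectedComponentMk ⟨x.1, hx⟩, ?_⟩
          rw [hFmk]
    have hjv : f (e.symm v) = v := hfe v
    have hvNa : f (e.symm v) ∈ Na := by rwa [hjv]
    have hjvT : (Sum.inr (e.symm v) : V ⊕ Fin n) ∈ T := hinrS _
    have hjvT' : (Sum.inr (e.symm v) : V ⊕ Fin n) ∈ T' := hsub _ hjvT
    -- F identifies the components of `inl a` and of the leaf of `v`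
    have hFeq : F (H.connectedComponentMk ⟨Sum.inl a, haT⟩)
        = F (H.connectedComponentMk ⟨Sum.inr (e.symm v), hjvT⟩) := by
      rw [hFmk, hFmk]
      apply ConnectedComponent.sound
      have h2 : H'.Adj ⟨Sum.inl v, hvT'⟩ ⟨Sum.inr (e.symm v), hjvT'⟩ := by
        show G.Adj (Sum.inl v) (Sum.inr (e.symm v))
        rw [hG, whisker_adj_inl_inr, hjv]
      exact hav'.reachable.trans h2.reachable
    have hne : H.connectedComponentMk ⟨Sum.inl a, haT⟩
        ≠ H.connectedComponentMk ⟨Sum.inr (e.symm v), hjvT⟩ := by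
      intro heq
      have hr := ConnectedComponent.exact heq
      have := reach_closed hCa (by simp) hr
      simp only [Set.mem_setOf_eq] at this
      rcases this with h | h
      · exact absurd h (by simp)
      · have : e.symm v = e.symm a := Sum.inr.inj h
        have : v = a := hesinj this
        subst this
        exact B.irrefl hvadj
    have hle : Nat.card H'.ConnectedComponent ≤ Nat.card H.ConnectedComponent :=
      Nat.card_le_card_of_surjective F hsurj
    have hlt : Nat.card H'.ConnectedComponent < Nat.card H.ConnectedComponent := by
      rcases lt_or_eq_of_le hle with h | h
      · exact h
      · exfalso
        have hbij := hsurj.bijective_of_nat_card_le h.ge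
        exact hne (hbij.1 hFeq)
    exact hlt
  -- conclude
  have := hu.2 S hcut
  omega
end

section
/- Let B be a block with n vertices and let G be obtained from B by attaching whiskers to vertices v_1, ..., v_k with k < n. If G is combinatorially unmixed, then every nonempty subset S ⊆ {v_1, ..., v_k} is a cut set of G, and moreover c_G(S) = |S| + 1, so that B \ S is connected. -/
open SimpleGraph Finset

variable {V : Type*}

lemma wadj_ll {k : ℕ} {B : SimpleGraph V} {f : Fin k → V} {a b : V} :
    (whisker B f).Adj (Sum.inl a) (Sum.inl b) ↔ B.Adj a b := by
  simp only [whisker, fromRel_adj]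
  constructor
  · rintro ⟨-, h | h⟩
    · exact h
    · exact h.symm
  · exact fun h => ⟨by simp [h.ne], Or.inl h⟩

lemma wadj_lr {k : ℕ} {B : SimpleGraph V} {f : Fin k → V} {a : V} {i : Fin k} :
    (whisker B f).Adj (Sum.inl a) (Sum.inr i) ↔ a = f i := by
  simp only [whisker, fromRel_adj]
  constructor
  · rintro ⟨-, h | h⟩
    · exact h
    · exact h.elim
  · exact fun h => ⟨by simp, Or.inl h⟩

lemma wadj_rr {k : ℕ} {B : SimpleGraph V} {f : Fin k → V} {i j : Fin k} :
    ¬ (whisker B f).Adj (Sum.inr i) (Sum.inr j) := by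
  simp only [whisker, fromRel_adj]
  rintro ⟨-, h | h⟩ <;> exact h

section Key
variable [DecidableEq V] {k : ℕ} (B : SimpleGraph V) (f : Fin k → V) (S : Finset V)

/-- vertex set of the whiskered graph minus `inl '' S`. -/
abbrev TT : Set (V ⊕ Fin k) := {x | x ∉ S.image Sum.inl}

abbrev WW : Set V := {v | v ∉ S}

lemma mem_TT_inl {v : V} : (Sum.inl v : V ⊕ Fin k) ∈ TT S ↔ v ∉ S := by
  simp [TT]

lemma mem_TT_inr (i : Fin k) : (Sum.inr i : V ⊕ Fin k) ∈ TT S := by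
  simp [TT]

/-- hom from induced B to induced whisker -/
def homBW : B.induce (WW S) →g (whisker B f).induce (TT S) where
  toFun := fun v => ⟨Sum.inl v.1, (mem_TT_inl S).mpr v.2⟩
  map_rel' := by
    rintro ⟨a, ha⟩ ⟨b, hb⟩ hab
    simp only [comap_adj, Function.Embedding.coe_subtype] at hab ⊢
    exact wadj_ll.mpr hab

noncomputable def gmap :
    (TT (k := k) S) → ((B.induce (WW S)).ConnectedComponent ⊕ {i : Fin k // f i ∈ S}) :=
  fun x => match x with
  | ⟨Sum.inl v, hv⟩ => Sum.inl ((B.induce (WW S)).connectedComponentMk ⟨v, (mem_TT_inl S).mp hv⟩)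
  | ⟨Sum.inr i, _⟩ =>
    if h : f i ∈ S then Sum.inr ⟨i, h⟩
    else Sum.inl ((B.induce (WW S)).connectedComponentMk ⟨f i, h⟩)

lemma gmap_adj (a b : TT (k := k) S) (hab : ((whisker B f).induce (TT S)).Adj a b) :
    gmap B f S a = gmap B f S b := by
  obtain ⟨x, hx⟩ := a
  obtain ⟨y, hy⟩ := b
  simp only [comap_adj, Function.Embedding.coe_subtype] at hab
  match x, y with
  | Sum.inl v, Sum.inl w =>
      have : B.Adj v w := wadj_ll.mp hab
      simp only [gmap, Sum.inl.injEq]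
      exact ConnectedComponent.sound (Adj.reachable (by
        simp only [comap_adj, Function.Embedding.coe_subtype]; exact this))
  | Sum.inl v, Sum.inr i =>
      have hvi : v = f i := wadj_lr.mp hab
      have hfi : f i ∉ S := hvi ▸ (mem_TT_inl S).mp hx
      simp only [gmap, dif_neg hfi, Sum.inl.injEq]
      congr 1
      exact Subtype.ext hvi
  | Sum.inr i, Sum.inl w =>
      have hwi : w = f i := wadj_lr.mp hab.symm
      have hfi : f i ∉ S := hwi ▸ (mem_TT_inl S).mp hy
      simp only [gmap, dif_neg hfi, Sum.inl.injEq]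
      congr 1
      exact Subtype.ext hwi.symm
  | Sum.inr i, Sum.inr j => exact absurd hab wadj_rr

lemma gmap_reachable (a b : TT (k := k) S)
    (h : ((whisker B f).induce (TT S)).Reachable a b) : gmap B f S a = gmap B f S b := by
  obtain ⟨p⟩ := h
  induction p with
  | nil => rfl
  | cons h _ ih => exact (gmap_adj B f S _ _ h).trans ih

noncomputable def compEquiv :
    ((B.induce (WW S)).ConnectedComponent ⊕ {i : Fin k // f i ∈ S}) ≃
      ((whisker B f).induce (TT S)).ConnectedComponent where
  toFun := fun x => match x with
    | Sum.inl c => c.map (homBW B f S)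
    | Sum.inr ⟨i, _⟩ => ((whisker B f).induce (TT S)).connectedComponentMk ⟨Sum.inr i, mem_TT_inr S i⟩
  invFun := Quot.lift (gmap B f S) (gmap_reachable B f S)
  left_inv := by
    rintro (c | ⟨i, hi⟩)
    · induction c using ConnectedComponent.ind with
      | _ v =>
        obtain ⟨v, hv⟩ := v
        simp only [ConnectedComponent.map_mk]
        rfl
    · simp only [connectedComponentMk]
      show gmap B f S _ = _
      simp [gmap, dif_pos hi]
  right_inv := by
    intro c
    induction c using ConnectedComponent.ind with
    | _ x =>
      obtain ⟨x, hx⟩ := x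
      match x with
      | Sum.inl v => rfl
      | Sum.inr i =>
        show (match gmap B f S ⟨Sum.inr i, hx⟩ with
          | Sum.inl c => c.map (homBW B f S)
          | Sum.inr ⟨j, _⟩ => ((whisker B f).induce (TT S)).connectedComponentMk
              ⟨Sum.inr j, mem_TT_inr S j⟩) = _
        by_cases h : f i ∈ S
        · simp [gmap, dif_pos h]
        · simp only [gmap, dif_neg h, ConnectedComponent.map_mk]
          exact ConnectedComponent.sound (Adj.reachable (by
            simp only [comap_adj, Function.Embedding.coe_subtype, homBW]
            exact (wadj_lr.mpr rfl).symm)).symm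

end Key

lemma card_comp_eq_one {α : Type*} {G : SimpleGraph α} (h : G.Connected) :
    Nat.card G.ConnectedComponent = 1 := by
  have : Subsingleton G.ConnectedComponent := h.preconnected.subsingleton_connectedComponent
  exact Nat.card_eq_one_iff_unique.mpr ⟨this, h.nonempty.map G.connectedComponentMk⟩

lemma connected_of_card_comp_eq_one {α : Type*} {G : SimpleGraph α}
    (h : Nat.card G.ConnectedComponent = 1) : G.Connected := by
  obtain ⟨hsub, hne⟩ := Nat.card_eq_one_iff_unique.mp h
  have hnev : Nonempty α := by
    obtain ⟨c⟩ := hne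
    induction c using ConnectedComponent.ind with
    | _ v => exact ⟨v⟩
  refine ⟨fun v w => ?_⟩
  exact (ConnectedComponent.eq).mp (Subsingleton.elim _ _)

lemma ncomp_empty {α : Type*} {G : SimpleGraph α} (h : G.Connected) :
    ncomp G (∅ : Finset α) = 1 := by
  have hset : {v : α | v ∉ (∅ : Finset α)} = Set.univ := by simp
  rw [ncomp, hset, Nat.card_congr (induceUnivIso G).connectedComponentEquiv]
  exact card_comp_eq_one h

section Count
variable [Fintype V] [DecidableEq V] {k : ℕ} (B : SimpleGraph V) {f : Fin k → V}

lemma key_count (hf : Function.Injective f) {S : Finset V} (hS : ↑S ⊆ Set.range f) :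
    ncomp (whisker B f) (S.image Sum.inl) =
      Nat.card ((B.induce (WW S)).ConnectedComponent) + S.card := by
  have h1 : ncomp (whisker B f) (S.image Sum.inl) =
      Nat.card (((whisker B f).induce (TT S)).ConnectedComponent) := rfl
  rw [h1, ← Nat.card_congr (compEquiv B f S), Nat.card_sum]
  congr 1
  have e : {i : Fin k // f i ∈ S} ≃ {v : V // v ∈ S} := by
    refine Equiv.ofBijective (fun i => ⟨f i, i.2⟩) ⟨?_, ?_⟩
    · intro i j hij
      exact Subtype.ext (hf (Subtype.ext_iff.mp hij))
    · rintro ⟨v, hv⟩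
      obtain ⟨i, rfl⟩ := hS hv
      exact ⟨⟨i, hv⟩, rfl⟩
  rw [Nat.card_congr e, Nat.card_eq_finsetCard]

end Count

theorem whisker_unmixed_whiskered_subsets_are_cutSets [Fintype V] [DecidableEq V] {k : ℕ}
    (B : SimpleGraph V) (hB : isBlock B) (f : Fin k → V) (hf : Function.Injective f)
    (hk : k < Fintype.card V) (hu : unmixed (whisker B f)) :
    ∀ S : Finset V, ↑S ⊆ Set.range f → S.Nonempty →
      cutSet (whisker B f) (S.image Sum.inl) ∧
      ncomp (whisker B f) (S.image Sum.inl) = S.card + 1 ∧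
      (B.induce {v | v ∉ S}).Connected := by
  obtain ⟨hconn, hmix⟩ := hu
  suffices main : ∀ n (S : Finset V), S.card = n → ↑S ⊆ Set.range f → S.Nonempty →
      (cutSet (whisker B f) (S.image Sum.inl) ∧
      ncomp (whisker B f) (S.image Sum.inl) = S.card + 1 ∧
      (B.induce {v | v ∉ S}).Connected) by
    intro S h1 h2; exact main S.card S rfl h1 h2
  intro n
  induction n with
  | zero =>
    intro S hcard _ hne
    exact absurd (Finset.card_eq_zero.mp hcard) (Finset.nonempty_iff_ne_empty.mp hne)
  | succ n ih =>
    intro S hcard hS hne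
    -- S.card ≤ k < Fintype.card V, so there is a vertex outside S
    have hSk : S.card ≤ k := by
      have hsub : S ⊆ Finset.univ.image f := by
        intro v hv
        obtain ⟨i, rfl⟩ := hS hv
        exact Finset.mem_image.mpr ⟨i, Finset.mem_univ i, rfl⟩
      calc S.card ≤ (Finset.univ.image f).card := Finset.card_le_card hsub
        _ ≤ (Finset.univ : Finset (Fin k)).card := Finset.card_image_le
        _ = k := by simp
    have hWne : Nonempty (WW (V := V) S) := by
      have : 0 < Sᶜ.card := by
        rw [Finset.card_compl]
        omega
      obtain ⟨v, hv⟩ := Finset.card_pos.mp this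
      exact ⟨⟨v, Finset.mem_compl.mp hv⟩⟩
    have hcpos : 0 < Nat.card ((B.induce (WW S)).ConnectedComponent) := by
      have : Nonempty ((B.induce (WW S)).ConnectedComponent) :=
        hWne.map (B.induce (WW S)).connectedComponentMk
      exact Nat.card_pos
    have hcount := key_count B hf hS
    have hcut : cutSet (whisker B f) (S.image Sum.inl) := by
      right
      intro x hx
      obtain ⟨v, hvS, rfl⟩ := Finset.mem_image.mp hx
      rw [← Finset.image_erase (f := (Sum.inl : V → V ⊕ Fin k)) Sum.inl_injective S v]
      by_cases hve : S.erase v = ∅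
      · rw [hve, Finset.image_empty, ncomp_empty hconn, hcount]
        omega
      · have hne' : (S.erase v).Nonempty := Finset.nonempty_iff_ne_empty.mpr hve
        have hsub' : ↑(S.erase v) ⊆ Set.range f :=
          Set.Subset.trans (by exact_mod_cast Finset.erase_subset v S) hS
        have hcard' : (S.erase v).card = n := by
          rw [Finset.card_erase_of_mem hvS, hcard]
          omega
        obtain ⟨-, hval, -⟩ := ih (S.erase v) hcard' hsub' hne'
        rw [hval, hcount, hcard', hcard]
        omega
    have himg : (S.image Sum.inl).card = S.card :=
      Finset.card_image_of_injective S (Sum.inl_injective (α := V) (β := Fin k))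
    have h2 := hmix _ hcut
    rw [himg] at h2
    have hc1 : Nat.card ((B.induce (WW S)).ConnectedComponent) = 1 := by omega
    exact ⟨hcut, h2, connected_of_card_comp_eq_one hc1⟩
end

section
/- Let G be a combinatorially unmixed graph, v a cut vertex of G, S a cut set of G \ {v} containing all neighbors of v, and s ∈ S such that S \ {s} is a cut set of G. Then s is not adjacent to v. -/
open SimpleGraph Finset

variable {V : Type*}

/-- Shortcut lemma: if every neighbor of `v` equals `s`, walks avoiding endpoints `v`
transfer to the induced graph on `{u | u ≠ v}`. -/
lemma reachable_induce_of_deg_le_one {W : Type*} (H : SimpleGraph W) (v s : W)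
    (hdeg : ∀ u, H.Adj v u → u = s) :
    ∀ (n : ℕ) {a b : W} (p : H.Walk a b), p.length ≤ n → ∀ (ha : a ≠ v) (hb : b ≠ v),
      (H.induce {u | u ≠ v}).Reachable ⟨a, ha⟩ ⟨b, hb⟩ := by
  intro n
  induction n with
  | zero =>
    intro a b p hp ha hb
    cases p with
    | nil => exact Reachable.refl _
    | cons h q => simp at hp
  | succ n ih =>
    intro a b p hp ha hb
    cases p with
    | nil => exact Reachable.refl _
    | @cons _ c _ h q =>
      by_cases hc : c = v
      · cases q with
        | nil => exact absurd hc hb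
        | @cons _ d _ h' q' =>
          have hd : d = s := hdeg _ (hc ▸ h')
          have has : a = s := hdeg _ (hc ▸ h.symm)
          have hdv : d ≠ v := by
            intro hdv; exact ha (has.trans (hd.symm.trans hdv))
          have := ih q' (by simp at hp ⊢; omega) hdv hb
          have hmk : (⟨a, ha⟩ : {u | u ≠ v}) = ⟨d, hdv⟩ := by
            exact Subtype.ext (has.trans hd.symm)
          rw [hmk]; exact this
      · have hadj : (H.induce {u | u ≠ v}).Adj ⟨a, ha⟩ ⟨c, hc⟩ := h
        exact hadj.reachable.trans (ih q (by simp at hp ⊢; omega) hc hb)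

lemma reachable_induce_of_deg_le_one' {W : Type*} (H : SimpleGraph W) (v s : W)
    (hdeg : ∀ u, H.Adj v u → u = s) {a b : W} (ha : a ≠ v) (hb : b ≠ v)
    (hr : H.Reachable a b) :
    (H.induce {u | u ≠ v}).Reachable ⟨a, ha⟩ ⟨b, hb⟩ := by
  obtain ⟨p⟩ := hr
  exact reachable_induce_of_deg_le_one H v s hdeg p.length p le_rfl ha hb

/-- The inclusion homomorphism from an induced subgraph. -/
def inclHom {W : Type*} (H : SimpleGraph W) (A : Set W) : (H.induce A) →g H where
  toFun := Subtype.val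
  map_rel' := fun h => h

lemma card_comp_isolated {W : Type*} [Finite W] (H : SimpleGraph W) (v : W)
    (hiso : ∀ u, ¬ H.Adj v u) :
    Nat.card H.ConnectedComponent
      = Nat.card ((H.induce {u | u ≠ v}).ConnectedComponent) + 1 := by
  classical
  set H' := H.induce {u | u ≠ v} with hH'
  have hdeg : ∀ u, H.Adj v u → u = v := fun u h => absurd h (hiso u)
  have hnr : ∀ x : W, x ≠ v → ¬ H.Reachable x v := by
    intro x hx hr
    obtain ⟨p⟩ := hr.symm
    cases p with
    | nil => exact absurd rfl hx
    | cons h q => exact hiso _ h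
  have key : ∀ x y : W, (hx : x ≠ v) → (hy : y ≠ v) → H.Reachable x y →
      H'.Reachable ⟨x, hx⟩ ⟨y, hy⟩ :=
    fun x y hx hy hr => reachable_induce_of_deg_le_one' H v v hdeg hx hy hr
  have e : H.ConnectedComponent ≃ Option H'.ConnectedComponent := by
    refine Equiv.ofBijective (fun C => C.lift (fun x =>
      if hx : x = v then none else some (H'.connectedComponentMk ⟨x, hx⟩)) ?_) ⟨?_, ?_⟩
    · intro x y p _
      by_cases hx : x = v
      · subst hx
        cases p with
        | nil => rfl
        | cons h q => exact absurd h (hiso _)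
      · by_cases hy : y = v
        · subst hy; exact absurd (hnr x hx p.reachable) (fun h => h)
        · simp only [dif_neg hx, dif_neg hy, Option.some.injEq]
          exact ConnectedComponent.sound (key x y hx hy p.reachable)
    · intro C D
      refine C.ind fun x => D.ind fun y => ?_
      intro h
      simp only [ConnectedComponent.lift_mk] at h
      by_cases hx : x = v <;> by_cases hy : y = v
      · rw [hx, hy]
      · rw [dif_pos hx, dif_neg hy] at h; exact absurd h (by simp)
      · rw [dif_neg hx, dif_pos hy] at h; exact absurd h (by simp)
      · rw [dif_neg hx, dif_neg hy] at h
        have hr := ConnectedComponent.exact (Option.some_injective _ h)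
        exact ConnectedComponent.sound (hr.map (inclHom H _))
    · intro o
      cases o with
      | none =>
        refine ⟨H.connectedComponentMk v, ?_⟩
        simp only [ConnectedComponent.lift_mk, dif_pos]
      | some C =>
        refine C.ind fun x => ?_
        refine ⟨H.connectedComponentMk x.val, ?_⟩
        have hx : (x : W) ≠ v := x.2
        simp only [ConnectedComponent.lift_mk, dif_neg hx]
  rw [Nat.card_congr e, Finite.card_option]

lemma card_comp_leaf {W : Type*} (H : SimpleGraph W) (v s : W)
    (hdeg : ∀ u, H.Adj v u → u = s) (hadj : H.Adj v s) :
    Nat.card H.ConnectedComponent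
      = Nat.card ((H.induce {u | u ≠ v}).ConnectedComponent) := by
  set H' := H.induce {u | u ≠ v} with hH'
  have hsv : s ≠ v := fun h => H.irrefl (h ▸ hadj)
  refine (Nat.card_congr (Equiv.ofBijective
    (fun C => C.map (inclHom H {u | u ≠ v})) ⟨?_, ?_⟩)).symm
  · intro C D
    refine C.ind fun x => D.ind fun y => ?_
    intro h
    have := ConnectedComponent.exact h
    exact ConnectedComponent.sound
      (reachable_induce_of_deg_le_one' H v s hdeg x.2 y.2 this)
  · intro C
    refine C.ind fun x => ?_
    by_cases hx : x = v
    · refine ⟨H'.connectedComponentMk ⟨s, hsv⟩, ?_⟩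
      simp only [ConnectedComponent.map_mk]
      exact ConnectedComponent.sound (by subst hx; exact (hadj.symm.reachable : H.Reachable s x))
    · exact ⟨H'.connectedComponentMk ⟨x, hx⟩, rfl⟩

/-- Collapsing a nested induced subgraph. -/
def induceInduceIso {W : Type*} (H : SimpleGraph W) (A : Set W) (B : Set A) :
    ((H.induce A).induce B) ≃g H.induce {x | ∃ h : x ∈ A, (⟨x, h⟩ : A) ∈ B} where
  toFun w := ⟨w.val.val, w.val.2, w.2⟩
  invFun x := ⟨⟨x.val, x.2.1⟩, x.2.2⟩
  left_inv w := rfl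
  right_inv x := rfl
  map_rel_iff' := Iff.rfl

lemma ncomp_tail_eq [DecidableEq V] (G : SimpleGraph V) (v : V)
    (R : Finset {u : V // u ≠ v})
    (hvA : v ∈ {u : V | u ∉ R.image Subtype.val}) :
    Nat.card (((G.induce {u : V | u ∉ R.image Subtype.val}).induce
        {z | z ≠ (⟨v, hvA⟩ : {u : V | u ∉ R.image Subtype.val})}).ConnectedComponent)
      = ncomp (G.induce {u : V | u ≠ v}) R := by
  rw [ncomp]
  have e1 := (induceInduceIso G {u : V | u ∉ R.image Subtype.val}
    {z | z ≠ ⟨v, hvA⟩}).connectedComponentEquiv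
  have e2 := (induceInduceIso G {u : V | u ≠ v} {w | w ∉ R}).connectedComponentEquiv
  have hset : {x : V | ∃ h : x ∈ {u : V | u ∉ R.image Subtype.val},
        (⟨x, h⟩ : {u : V | u ∉ R.image Subtype.val}) ∈ {z | z ≠ ⟨v, hvA⟩}}
      = {x : V | ∃ h : x ∈ {u : V | u ≠ v}, (⟨x, h⟩ : {u : V | u ≠ v}) ∈ {w | w ∉ R}} := by
    ext x
    simp only [Set.mem_setOf_eq]
    constructor
    · rintro ⟨hx, hne⟩
      have hxv : x ≠ v := fun h => hne (Subtype.ext h)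
      exact ⟨hxv, fun hmem => hx (Finset.mem_image.mpr ⟨⟨x, hxv⟩, hmem, rfl⟩)⟩
    · rintro ⟨hxv, hxR⟩
      refine ⟨?_, ?_⟩
      · intro hmem
        obtain ⟨a, ha, hav⟩ := Finset.mem_image.mp hmem
        exact hxR (by rwa [show (⟨x, hxv⟩ : {u : V // u ≠ v}) = a from Subtype.ext hav.symm])
      · intro h
        exact hxv (congrArg Subtype.val h)
  rw [Nat.card_congr e1, Nat.card_congr e2, hset]
  rfl

lemma ncomp_image_eq_succ [Fintype V] [DecidableEq V] (G : SimpleGraph V) (v : V)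
    (R : Finset {u : V // u ≠ v})
    (hR : ∀ u, G.Adj v u → u ∈ R.image Subtype.val) :
    ncomp G (R.image Subtype.val) = ncomp (G.induce {u | u ≠ v}) R + 1 := by
  have hvA : v ∈ {u : V | u ∉ R.image Subtype.val} := by
    simp only [Set.mem_setOf_eq, Finset.mem_image, not_exists]
    rintro a ⟨ha, hav⟩
    exact a.2 hav
  have hiso : ∀ w, ¬ (G.induce {u : V | u ∉ R.image Subtype.val}).Adj ⟨v, hvA⟩ w := by
    rintro ⟨u, hu⟩ hadj
    exact hu (hR u hadj)
  rw [ncomp, card_comp_isolated _ ⟨v, hvA⟩ hiso, ncomp_tail_eq G v R hvA]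

lemma ncomp_image_eq [Fintype V] [DecidableEq V] (G : SimpleGraph V) (v : V)
    (R : Finset {u : V // u ≠ v}) (w : {u : V // u ≠ v}) (hw : w ∉ R)
    (hvw : G.Adj v ↑w)
    (hR : ∀ u, G.Adj v u → u = ↑w ∨ u ∈ R.image Subtype.val) :
    ncomp G (R.image Subtype.val) = ncomp (G.induce {u | u ≠ v}) R := by
  have hvA : v ∈ {u : V | u ∉ R.image Subtype.val} := by
    simp only [Set.mem_setOf_eq, Finset.mem_image, not_exists]
    rintro a ⟨ha, hav⟩
    exact a.2 hav
  have hwA : (w : V) ∈ {u : V | u ∉ R.image Subtype.val} := by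
    simp only [Set.mem_setOf_eq, Finset.mem_image, not_exists]
    rintro a ⟨ha, hav⟩
    exact hw (by rwa [show w = a from Subtype.ext hav.symm])
  have hdeg : ∀ z, (G.induce {u : V | u ∉ R.image Subtype.val}).Adj ⟨v, hvA⟩ z
      → z = ⟨↑w, hwA⟩ := by
    rintro ⟨u, hu⟩ hadj
    rcases hR u hadj with h | h
    · exact Subtype.ext h
    · exact absurd h hu
  have hadjA : (G.induce {u : V | u ∉ R.image Subtype.val}).Adj ⟨v, hvA⟩ ⟨↑w, hwA⟩ := hvw
  rw [ncomp, card_comp_leaf _ _ _ hdeg hadjA, ncomp_tail_eq G v R hvA]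

theorem erase_cutSet_not_adj [Fintype V] [DecidableEq V] (G : SimpleGraph V)
    (hG : unmixed G) (v : V) (hv : cutSet G {v})
    (S : Finset {u : V // u ≠ v})
    (hS : cutSet (G.induce {u | u ≠ v}) S)
    (hN : ∀ u, G.Adj v u → u ∈ S.image Subtype.val)
    (s : {u : V // u ≠ v}) (hs : s ∈ S)
    (hcs : cutSet G ((S.erase s).image Subtype.val)) :
    ¬ G.Adj v ↑s := by
  classical
  intro hadj
  have hval : Function.Injective (Subtype.val : {u : V // u ≠ v} → V) :=
    Subtype.val_injective
  have hSne : S ≠ ∅ := fun h => by simp [h] at hs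
  have hScut := hS.resolve_left hSne
  have herase_mem : ∀ (j : {u : V // u ≠ v}) (u : V), G.Adj v u → u ≠ ↑j →
      u ∈ (S.erase j).image Subtype.val := by
    intro j u hu hne
    obtain ⟨a, ha, hav⟩ := Finset.mem_image.mp (hN u hu)
    refine Finset.mem_image.mpr ⟨a, Finset.mem_erase.mpr ⟨fun h => hne ?_, ha⟩, hav⟩
    rw [← hav, h]
  have hTcut : cutSet G (S.image Subtype.val) := by
    right
    intro i hi
    obtain ⟨j, hj, rfl⟩ := Finset.mem_image.mp hi
    rw [← Finset.image_erase hval S j]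
    by_cases hji : G.Adj v ↑j
    · rw [ncomp_image_eq G v (S.erase j) j (Finset.notMem_erase j S) hji ?_,
        ncomp_image_eq_succ G v S hN]
      · exact (hScut j hj).trans (Nat.lt_succ_self _)
      · intro u hu
        by_cases h : u = ↑j
        · exact Or.inl h
        · exact Or.inr (herase_mem j u hu h)
    · rw [ncomp_image_eq_succ G v (S.erase j)
        (fun u hu => herase_mem j u hu (fun h => hji (h ▸ hu))),
        ncomp_image_eq_succ G v S hN]
      exact Nat.succ_lt_succ (hScut j hj)
  have hT := hG.2 _ hTcut
  have hT' := hG.2 _ hcs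
  rw [Finset.card_image_of_injective _ hval, Finset.card_erase_of_mem hs] at hT'
  rw [Finset.card_image_of_injective _ hval] at hT
  rw [ncomp_image_eq_succ G v S hN] at hT
  rw [ncomp_image_eq G v (S.erase s) s (Finset.notMem_erase s S) hadj ?_] at hT'
  · have h1 := hScut s hs
    have hcard : 1 ≤ S.card := Finset.card_pos.mpr ⟨s, hs⟩
    omega
  · intro u hu
    by_cases h : u = ↑s
    · exact Or.inl h
    · exact Or.inr (herase_mem s u hu h)
end

section
/- Let B be a block with n vertices and G obtained by attaching k whiskers to vertices v_1, ..., v_k of B, with k = n − 1. Denote by w the unique vertex of B that is not whiskered. If G is combinatorially unmixed, then G is accessible: for every nonempty cut set S of G there exists s ∈ S such that S \ {s} is a cut set of G. (In fact, if w ∈ S one can take s = w.) -/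
open SimpleGraph Finset

variable {V : Type*}

section Aux

variable {W : Type*} [Fintype W] [DecidableEq W]

private lemma walk_const {H : SimpleGraph W} {β : Sort*} (g : W → β)
    (h : ∀ u v, H.Adj u v → g u = g v) : ∀ {u v : W} (p : H.Walk u v), g u = g v := by
  intro u v p
  induction p with
  | nil => rfl
  | cons hadj _ ih => exact (h _ _ hadj).trans ih

/-- Lift an adjacency-constant vertex function to connected components. -/
private def compMap (H : SimpleGraph W) {β : Sort*} (g : W → β)
    (h : ∀ u v, H.Adj u v → g u = g v) : H.ConnectedComponent → β :=
  ConnectedComponent.lift g (fun _ _ p _ => walk_const g h p)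

@[simp] private lemma compMap_mk (H : SimpleGraph W) {β : Sort*} (g : W → β)
    (h : ∀ u v, H.Adj u v → g u = g v) (v : W) :
    compMap H g h (H.connectedComponentMk v) = g v := rfl

instance (H : SimpleGraph W) (s : Set W) [DecidablePred (· ∈ s)] :
    Finite ((H.induce s).ConnectedComponent) := Quot.finite _

/-- If `x` has at most one neighbour outside `S`, then removing `x` from `S`
does not decrease the number of components. -/
lemma ncomp_le_ncomp_erase {H : SimpleGraph W} {S : Finset W} (x : W)
    (hcand : ∀ z₁ z₂, z₁ ∉ S → z₂ ∉ S → H.Adj x z₁ → H.Adj x z₂ → z₁ = z₂) :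
    ncomp H S ≤ ncomp H (S.erase x) := by
  rcases isEmpty_or_nonempty ({v : W | v ∉ S}) with hE | hNe
  · have : Nat.card ((H.induce {v : W | v ∉ S}).ConnectedComponent) = 0 :=
      Nat.card_of_isEmpty
    simp only [ncomp, this]
    exact Nat.zero_le _
  · -- pick the candidate neighbour y
    obtain ⟨y, hyS, hy⟩ : ∃ y, y ∉ S ∧ ∀ z, z ∉ S → H.Adj x z → z = y := by
      by_cases hz : ∃ z, z ∉ S ∧ H.Adj x z
      · obtain ⟨y, hyS, hyadj⟩ := hz
        exact ⟨y, hyS, fun z h1 h2 => hcand z y h1 hyS h2 hyadj⟩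
      · obtain ⟨⟨y, hyS⟩⟩ := hNe
        exact ⟨y, hyS, fun z h1 h2 => absurd ⟨z, h1, h2⟩ hz⟩
    set H1 := H.induce {v : W | v ∉ S} with hH1
    set H2 := H.induce {v : W | v ∉ S.erase x} with hH2
    have hr : ∀ v : {v : W | v ∉ S.erase x}, (v : W) ∉ S ∨ (v : W) = x := by
      rintro ⟨v, hv⟩
      by_cases h : v ∈ S
      · right
        by_contra hne
        exact hv (Finset.mem_erase.mpr ⟨hne, h⟩)
      · exact Or.inl h
    classical
    let g : {v : W | v ∉ S.erase x} → H1.ConnectedComponent := fun v =>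
      if h : (v : W) ∈ S then H1.connectedComponentMk ⟨y, hyS⟩
      else H1.connectedComponentMk ⟨(v : W), h⟩
    have hconst : ∀ u v, H2.Adj u v → g u = g v := by
      rintro ⟨u, hu⟩ ⟨v, hv⟩ hadj
      have hadj' : H.Adj u v := hadj
      by_cases h1 : u ∈ S <;> by_cases h2 : v ∈ S
      · -- u = x = v, impossible
        have hu' : u = x := (hr ⟨u, hu⟩).resolve_left (by simpa using h1)
        have hv' : v = x := (hr ⟨v, hv⟩).resolve_left (by simpa using h2)
        rw [hu', hv'] at hadj'
        exact absurd hadj' (H.irrefl)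
      · -- u = x, v ∉ S : v = y
        have hu' : u = x := (hr ⟨u, hu⟩).resolve_left (by simpa using h1)
        have : v = y := hy v h2 (hu' ▸ hadj')
        simp only [g, dif_pos h1, dif_neg h2]
        congr 1
        exact Subtype.ext this.symm
      · have hv' := (hr ⟨v, hv⟩).resolve_left (by simpa using h2)
        have : u = y := hy u h1 (hv' ▸ hadj'.symm)
        simp only [g, dif_neg h1, dif_pos h2]
        congr 1
        exact Subtype.ext this
      · simp only [g, dif_neg h1, dif_neg h2]
        exact ConnectedComponent.connectedComponentMk_eq_of_adj hadj
    have hsurj : Function.Surjective (compMap H2 g hconst) := by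
      intro c
      refine c.ind ?_
      rintro ⟨v, hv⟩
      have hv' : v ∉ S.erase x := fun h => hv (Finset.mem_of_mem_erase h)
      refine ⟨H2.connectedComponentMk ⟨v, hv'⟩, ?_⟩
      simp only [compMap_mk, g, dif_neg (show v ∈ S → False from hv)]
    exact Nat.card_le_card_of_surjective _ hsurj


/-- If `x ∈ S` is adjacent to two vertices outside `S` lying in different components,
then removing `x` strictly decreases the number of components. -/
lemma ncomp_erase_lt {H : SimpleGraph W} {S : Finset W} {x y z : W}
    (hx : x ∈ S) (hyS : y ∉ S) (hzS : z ∉ S) (hxy : H.Adj x y) (hxz : H.Adj x z)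
    (hne : ¬ (H.induce {v : W | v ∉ S}).Reachable ⟨y, hyS⟩ ⟨z, hzS⟩) :
    ncomp H (S.erase x) < ncomp H S := by
  classical
  set H1 := H.induce {v : W | v ∉ S} with hH1
  set H2 := H.induce {v : W | v ∉ S.erase x} with hH2
  have hsub : ∀ {v : W}, v ∉ S → v ∉ S.erase x := fun hv h => hv (Finset.mem_of_mem_erase h)
  let g : {v : W | v ∉ S} → H2.ConnectedComponent := fun v =>
    H2.connectedComponentMk ⟨(v : W), hsub v.2⟩
  have hconst : ∀ u v, H1.Adj u v → g u = g v := by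
    rintro ⟨u, hu⟩ ⟨v, hv⟩ hadj
    have hadj' : H.Adj u v := hadj
    exact ConnectedComponent.connectedComponentMk_eq_of_adj (hadj' : H2.Adj ⟨u, _⟩ ⟨v, _⟩)
  have hxE : x ∉ S.erase x := Finset.notMem_erase x S
  have hadjxy : H2.Adj ⟨x, hxE⟩ ⟨y, hsub hyS⟩ := hxy
  have hadjxz : H2.Adj ⟨x, hxE⟩ ⟨z, hsub hzS⟩ := hxz
  have hsurj : Function.Surjective (compMap H1 g hconst) := by
    intro c
    refine c.ind ?_
    rintro ⟨v, hv⟩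
    by_cases h : v ∈ S
    · have hvx : v = x := by
        by_contra hne'
        exact hv (Finset.mem_erase.mpr ⟨hne', h⟩)
      refine ⟨H1.connectedComponentMk ⟨y, hyS⟩, ?_⟩
      simp only [compMap_mk, g]
      subst hvx
      exact ConnectedComponent.connectedComponentMk_eq_of_adj hadjxy.symm
    · exact ⟨H1.connectedComponentMk ⟨v, h⟩, rfl⟩
  have hninj : ¬ Function.Injective (compMap H1 g hconst) := by
    intro hinj
    have heq : compMap H1 g hconst (H1.connectedComponentMk ⟨y, hyS⟩) =
        compMap H1 g hconst (H1.connectedComponentMk ⟨z, hzS⟩) := by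
      simp only [compMap_mk, g]
      exact (ConnectedComponent.connectedComponentMk_eq_of_adj hadjxy.symm).trans
        (ConnectedComponent.connectedComponentMk_eq_of_adj hadjxz.symm).symm
    exact hne (ConnectedComponent.exact (hinj heq))
  haveI : Fintype H1.ConnectedComponent := Fintype.ofFinite _
  haveI : Fintype H2.ConnectedComponent := Fintype.ofFinite _
  have := Fintype.card_lt_of_surjective_not_injective _ hsurj hninj
  simpa only [ncomp, Nat.card_eq_fintype_card] using this

end Aux


section Whisker

variable [Fintype V] [DecidableEq V] {k : ℕ} {B : SimpleGraph V} {f : Fin k → V}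

private lemma adj_inr {i : Fin k} {z : V ⊕ Fin k} (h : (whisker B f).Adj (Sum.inr i) z) :
    z = Sum.inl (f i) := by
  rw [whisker, fromRel_adj] at h
  obtain ⟨-, h | h⟩ := h
  · cases z <;> simp_all
  · cases z with
    | inl a => simp_all
    | inr j => simp_all

private lemma adj_inl_inl {a b : V} (h : B.Adj a b) :
    (whisker B f).Adj (Sum.inl a) (Sum.inl b) := by
  rw [whisker, fromRel_adj]
  exact ⟨by simp [h.ne], Or.inl h⟩

private lemma adj_inl_inr (i : Fin k) : (whisker B f).Adj (Sum.inl (f i)) (Sum.inr i) := by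
  rw [whisker, fromRel_adj]
  exact ⟨by simp, Or.inl rfl⟩

/-- classification of neighbours of `inl a` -/
private lemma adj_inl {a : V} {z : V ⊕ Fin k} (h : (whisker B f).Adj (Sum.inl a) z) :
    (∃ b, z = Sum.inl b ∧ B.Adj a b) ∨ (∃ i, z = Sum.inr i ∧ a = f i) := by
  rw [whisker, fromRel_adj] at h
  obtain ⟨-, h | h⟩ := h <;> cases z with
  | inl b => exact Or.inl ⟨b, rfl, by simp_all [SimpleGraph.adj_comm]⟩
  | inr j => exact Or.inr ⟨j, rfl, by simp_all⟩

/-- no leaf belongs to a cut set -/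
private lemma inr_notMem_cutSet {S : Finset (V ⊕ Fin k)} (hS : cutSet (whisker B f) S)
    (i : Fin k) : Sum.inr i ∉ S := by
  intro hmem
  rcases hS with hS | hS
  · simp [hS] at hmem
  · have hlt := hS _ hmem
    have hle : ncomp (whisker B f) S ≤ ncomp (whisker B f) (S.erase (Sum.inr i)) :=
      ncomp_le_ncomp_erase (Sum.inr i) (fun z₁ z₂ _ _ h1 h2 => (adj_inr h1).trans (adj_inr h2).symm)
    omega

/-- every whiskered vertex in a cut set has a `B`-neighbour outside the cut set -/
private lemma exists_neighbor_outside {S : Finset (V ⊕ Fin k)} (hS : cutSet (whisker B f) S)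
    (hf : Function.Injective f) {i : Fin k} (hmem : Sum.inl (f i) ∈ S) :
    ∃ b, B.Adj (f i) b ∧ Sum.inl b ∉ S := by
  by_contra hcon
  push_neg at hcon
  have hlt : ncomp (whisker B f) (S.erase (Sum.inl (f i))) < ncomp (whisker B f) S := by
    rcases hS with hS | hS
    · simp [hS] at hmem
    · exact hS _ hmem
  have hcand : ∀ z₁ z₂ : V ⊕ Fin k, z₁ ∉ S → z₂ ∉ S → (whisker B f).Adj (Sum.inl (f i)) z₁ →
      (whisker B f).Adj (Sum.inl (f i)) z₂ → z₁ = z₂ := by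
    have key : ∀ z : V ⊕ Fin k, z ∉ S → (whisker B f).Adj (Sum.inl (f i)) z → z = Sum.inr i := by
      intro z hz hadj
      rcases adj_inl hadj with ⟨b, rfl, hb⟩ | ⟨j, rfl, hj⟩
      · exact absurd (hcon b hb) hz
      · rw [hf hj]
    intro z₁ z₂ h1 h2 ha1 ha2
    rw [key z₁ h1 ha1, key z₂ h2 ha2]
  have hle := ncomp_le_ncomp_erase (Sum.inl (f i)) hcand
  omega

/-- a leaf whose support vertex is removed cannot reach any other vertex -/
private lemma leaf_not_reachable {T : Finset (V ⊕ Fin k)} {i : Fin k}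
    (hfi : Sum.inl (f i) ∈ T) {c : V ⊕ Fin k} (hc : c ≠ Sum.inr i)
    (h1 : Sum.inr i ∈ {v : V ⊕ Fin k | v ∉ T}) (h2 : c ∈ {v : V ⊕ Fin k | v ∉ T}) :
    ¬ ((whisker B f).induce {v : V ⊕ Fin k | v ∉ T}).Reachable ⟨Sum.inr i, h1⟩ ⟨c, h2⟩ := by
  rintro ⟨p⟩
  cases p with
  | nil => exact hc rfl
  | @cons _ w _ hadj q =>
      have hadj' : (whisker B f).Adj (Sum.inr i) (w : V ⊕ Fin k) := hadj
      have := adj_inr hadj'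
      exact w.2 (this ▸ hfi)

/-- removing a whiskered vertex with an outside `B`-neighbour strictly decreases components -/
private lemma erase_whiskered_lt {T : Finset (V ⊕ Fin k)} {j : Fin k}
    (hfj : Sum.inl (f j) ∈ T) (hleaf : Sum.inr j ∉ T) {b : V} (hb : B.Adj (f j) b)
    (hbT : Sum.inl b ∉ T) :
    ncomp (whisker B f) (T.erase (Sum.inl (f j))) < ncomp (whisker B f) T :=
  ncomp_erase_lt hfj (show Sum.inr j ∉ T from hleaf) hbT (adj_inl_inr j) (adj_inl_inl hb)
    (leaf_not_reachable hfj (by simp) _ _)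

end Whisker


theorem unmixed_accessible_of_n_minus_one_whiskers [Fintype V] [DecidableEq V] {k : ℕ}
    (B : SimpleGraph V) (hB : isBlock B) (f : Fin k → V) (hf : Function.Injective f)
    (hcard : Fintype.card V = k + 1) (hu : unmixed (whisker B f)) :
    ∀ S : Finset (V ⊕ Fin k), cutSet (whisker B f) S → S ≠ ∅ →
      ∃ s ∈ S, cutSet (whisker B f) (S.erase s) := by
  classical
  intro S hS hSne
  have hScut : ∀ i ∈ S, ncomp (whisker B f) (S.erase i) < ncomp (whisker B f) S :=
    hS.resolve_left hSne
  have hnoleaf : ∀ j : Fin k, Sum.inr j ∉ S := inr_notMem_cutSet hS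
  set R : Finset V := Finset.univ.image f with hR
  have hRcard : R.card = k := by
    rw [hR, Finset.card_image_of_injective _ hf, Finset.card_univ, Fintype.card_fin]
  have hcompl : Rᶜ.card = 1 := by
    rw [Finset.card_compl, hRcard, hcard]
    omega
  have huniq : ∀ a b : V, a ∉ R → b ∉ R → a = b := by
    intro a b ha hb
    have h1 : a ∈ Rᶜ := Finset.mem_compl.mpr ha
    have h2 : b ∈ Rᶜ := Finset.mem_compl.mpr hb
    exact Finset.card_le_one.mp (le_of_eq hcompl) a h1 b h2
  -- key sub-proof: if every element of `S.erase s` is a whiskered vertex,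
  -- then `S.erase s` is a cut set
  have key : ∀ s ∈ S, (∀ x ∈ S.erase s, ∃ j : Fin k, x = Sum.inl (f j)) →
      cutSet (whisker B f) (S.erase s) := by
    intro s hs hform
    by_cases hE : S.erase s = ∅
    · exact Or.inl hE
    · refine Or.inr ?_
      intro x hx
      obtain ⟨j, rfl⟩ := hform x hx
      obtain ⟨b, hb, hbS⟩ := exists_neighbor_outside hS hf (Finset.mem_of_mem_erase hx)
      have hleaf : Sum.inr j ∉ S.erase s := fun h => hnoleaf j (Finset.mem_of_mem_erase h)
      have hbT : Sum.inl b ∉ S.erase s := fun h => hbS (Finset.mem_of_mem_erase h)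
      exact erase_whiskered_lt hx hleaf hb hbT
  by_cases hw : ∃ a : V, Sum.inl a ∈ S ∧ a ∉ R
  · obtain ⟨w, hwS, hwR⟩ := hw
    refine ⟨Sum.inl w, hwS, key _ hwS ?_⟩
    intro x hx
    have hxS : x ∈ S := Finset.mem_of_mem_erase hx
    cases x with
    | inl a =>
        by_cases haR : a ∈ R
        · obtain ⟨j, -, rfl⟩ := Finset.mem_image.mp haR
          exact ⟨j, rfl⟩
        · exact absurd (congrArg Sum.inl (huniq a w haR hwR))
            (Finset.ne_of_mem_erase hx)
    | inr j => exact absurd hxS (hnoleaf j)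
  · obtain ⟨s, hs⟩ := Finset.nonempty_iff_ne_empty.mpr hSne
    refine ⟨s, hs, key _ hs ?_⟩
    intro x hx
    have hxS : x ∈ S := Finset.mem_of_mem_erase hx
    cases x with
    | inl a =>
        by_cases haR : a ∈ R
        · obtain ⟨j, -, rfl⟩ := Finset.mem_image.mp haR
          exact ⟨j, rfl⟩
        · exact absurd ⟨a, hxS, haR⟩ hw
    | inr j => exact absurd hxS (hnoleaf j)
end

section
/- Let G be a graph obtained from a block B by attaching whiskers at each vertex of a set W of cut vertices, and suppose G is accessible with at least 3 whiskers. If w is a free vertex of B (a vertex belonging to a unique maximal clique of B) that is not a whiskered vertex, then w does not belong to any cut set of G; consequently, for any cut vertex v of G adjacent to w, no cut set of G \ {v} can contain N_B(v). -/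
open SimpleGraph Finset

variable {V : Type*}

/-!
A free vertex `u` of `B` is simplicial: every edge at `u` extends to a maximal clique, which must
be the unique one containing `u`, so the neighbourhood of `u` is a clique. As `u` carries no
whisker, it stays simplicial in the whiskered graph and in every induced subgraph containing it.
A simplicial vertex lies in no cut set: putting it back into the graph cannot merge two
components, because a walk through it can step directly between its two neighbours.
-/

namespace SimpleGraph

variable {G : SimpleGraph V} {v : V}

/-- The walk may start at `v ∉ s`; the vertex `x'` stands in for its start, being either the
start itself or a neighbour of `v` in `s`. -/
lemma reachable_induce_of_walk_of_subset_insert (hv : G.IsClique (G.neighborSet v))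
    {s t : Set V} (hvs : v ∉ s) (hts : t ⊆ insert v s) {x y : t} (p : (G.induce t).Walk x y)
    (hy : (y : V) ∈ s) (x' : V) (hx' : x' ∈ s)
    (hxx' : x' = x ∨ ((x : V) = v ∧ G.Adj v x')) :
    (G.induce s).Reachable ⟨x', hx'⟩ ⟨y, hy⟩ := by
  induction p generalizing x' with
  | nil =>
    rcases hxx' with rfl | ⟨hx, -⟩
    · rfl
    · exact absurd (hx ▸ hy) hvs
  | @cons x z y h q ih =>
    have hxz : G.Adj x z := h
    by_cases hz : (z : V) ∈ s
    · refine Reachable.trans ?_ (ih hy z hz (Or.inl rfl))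
      rcases hxx' with rfl | ⟨hx, hvx'⟩
      · exact Adj.reachable hxz
      · rw [hx] at hxz
        by_cases hx'z : x' = z
        · subst hx'z; rfl
        · exact Adj.reachable (hv hvx' hxz hx'z)
    · have hzv : (z : V) = v := (hts z.2).resolve_right hz
      rw [hzv] at hxz
      obtain rfl : x' = x := hxx'.resolve_right fun ⟨hx, _⟩ => hxz.ne hx
      exact ih hy x hx' (Or.inr ⟨hzv, hxz.symm⟩)

lemma ncomp_le_ncomp_erase [Finite V] [DecidableEq V] (hv : G.IsClique (G.neighborSet v))
    {S : Finset V} (hvS : v ∈ S) : ncomp G S ≤ ncomp G (S.erase v) := by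
  have hsub : {w | w ∉ S} ⊆ {w | w ∉ S.erase v} := fun w hw hw' => hw (mem_of_mem_erase hw')
  have hts : {w | w ∉ S.erase v} ⊆ insert v {w | w ∉ S} := by
    intro w hw
    by_cases hwv : w = v
    · exact Or.inl hwv
    · exact Or.inr fun hwS => hw (mem_erase.mpr ⟨hwv, hwS⟩)
  refine Nat.card_le_card_of_injective (ConnectedComponent.map (G.induceHomOfLE hsub).toHom) ?_
  refine ConnectedComponent.ind₂ fun a b hab => ?_
  obtain ⟨p⟩ := ConnectedComponent.exact hab
  exact ConnectedComponent.sound <|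
    reachable_induce_of_walk_of_subset_insert hv (not_not_intro hvS) hts p b.2 a a.2 (Or.inl rfl)

lemma notMem_of_cutSet_of_isClique_neighborSet [Finite V] [DecidableEq V]
    (hv : G.IsClique (G.neighborSet v)) {S : Finset V} (hS : cutSet G S) : v ∉ S := by
  intro hvS
  rcases hS with rfl | hS
  · exact notMem_empty v hvS
  · exact (hS v hvS).not_ge (ncomp_le_ncomp_erase hv hvS)

lemma isClique_neighborSet_induce {s : Set V} {a : s} (h : G.IsClique (G.neighborSet a)) :
    (G.induce s).IsClique ((G.induce s).neighborSet a) :=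
  fun _ hb _ hc hbc => h hb hc (Subtype.coe_ne_coe.mpr hbc)

lemma isClique_neighborSet_of_freeVertex [Finite V] (h : freeVertex G v) :
    G.IsClique (G.neighborSet v) := by
  obtain ⟨s, ⟨-, hs, -⟩, hunique⟩ := h
  refine hs.subset fun a hva => ?_
  obtain ⟨t, hvat, ht⟩ := Finite.exists_le_maximal (isClique_pair.mpr fun _ => hva)
  have hts : t = s :=
    hunique t ⟨hvat (by simp), ht.1, fun t' ht' htt' => le_antisymm htt' (ht.2 ht' htt')⟩
  exact hts ▸ hvat (by simp)

end SimpleGraph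

section Whisker

variable {k : ℕ} {B : SimpleGraph V} {f : Fin k → V}

lemma whisker_adj_inl_inl_s10 {a b : V} : (whisker B f).Adj (.inl a) (.inl b) ↔ B.Adj a b := by
  simp only [whisker, fromRel_adj, ne_eq, Sum.inl.injEq]
  exact ⟨fun ⟨_, h⟩ => h.elim id Adj.symm, fun h => ⟨h.ne, Or.inl h⟩⟩

lemma whisker_neighborSet_inl {u : V} (hu : u ∉ Set.range f) :
    (whisker B f).neighborSet (.inl u) = Sum.inl '' B.neighborSet u := by
  ext (x | i)
  · simp [whisker_adj_inl_inl_s10]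
  · simp only [mem_neighborSet, whisker, fromRel_adj, Set.mem_image, reduceCtorEq, and_false,
      exists_false, iff_false, not_and, not_or]
    exact fun _ => ⟨fun h => hu ⟨i, h.symm⟩, id⟩

lemma isClique_neighborSet_whisker_inl {u : V} (hB : B.IsClique (B.neighborSet u))
    (hu : u ∉ Set.range f) : (whisker B f).IsClique ((whisker B f).neighborSet (.inl u)) := by
  rw [whisker_neighborSet_inl hu]
  rintro _ ⟨a, ha, rfl⟩ _ ⟨b, hb, rfl⟩ hab
  exact whisker_adj_inl_inl_s10.mpr (hB ha hb fun h => hab (congrArg Sum.inl h))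

end Whisker

theorem freeVertex_not_in_cutSets_whisker_general [Fintype V] [DecidableEq V] {k : ℕ}
    (B : SimpleGraph V)
    (f : Fin k → V)
    (u : V) (hfree : freeVertex B u) (hnot : u ∉ Set.range f) :
    (∀ S : Finset (V ⊕ Fin k), cutSet (whisker B f) S → Sum.inl u ∉ S) ∧
    ∀ i : Fin k, B.Adj (f i) u →
      ∀ S : Finset {x : V ⊕ Fin k // x ≠ Sum.inl (f i)},
        cutSet ((whisker B f).induce {x | x ≠ Sum.inl (f i)}) S →
        ¬ (∀ z, B.Adj (f i) z → Sum.inl z ∈ S.image Subtype.val) := by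
  have hu := isClique_neighborSet_whisker_inl (isClique_neighborSet_of_freeVertex hfree) hnot
  refine ⟨fun S hS => notMem_of_cutSet_of_isClique_neighborSet hu hS, fun i hiu S hS hN => ?_⟩
  obtain ⟨⟨_, _⟩, haS, rfl⟩ := mem_image.mp (hN u hiu)
  exact notMem_of_cutSet_of_isClique_neighborSet (isClique_neighborSet_induce hu) hS haS

theorem freeVertex_not_in_cutSets_whisker [Fintype V] [DecidableEq V] {k : ℕ}
    (hk : 3 ≤ k) (B : SimpleGraph V) (hB : isBlock B)
    (f : Fin k → V) (hf : Function.Injective f)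
    (hacc : accessible (whisker B f))
    (u : V) (hfree : freeVertex B u) (hnot : u ∉ Set.range f) :
    (∀ S : Finset (V ⊕ Fin k), cutSet (whisker B f) S → Sum.inl u ∉ S) ∧
    ∀ i : Fin k, B.Adj (f i) u →
      ∀ S : Finset {x : V ⊕ Fin k // x ≠ Sum.inl (f i)},
        cutSet ((whisker B f).induce {x | x ≠ Sum.inl (f i)}) S →
        ¬ (∀ z, B.Adj (f i) z → Sum.inl z ∈ S.image Subtype.val) :=
  freeVertex_not_in_cutSets_whisker_general B f u hfree hnot
end

section
/- Let G be any finite simple graph and v a free vertex of G (a vertex belonging to a unique maximal clique). Then v does not belong to any cut set of G. -/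
open SimpleGraph Finset

variable {V : Type*}

/-!
The neighbours of a free vertex `v` all lie in its unique maximal clique, so they are pairwise
adjacent. Hence any walk through `v` can be shortcut past `v`, and putting `v` back into the
graph `G ∖ S` never merges two components: `c_G(S) ≤ c_G(S ∖ {v})`, so `v` cannot belong to a
nonempty cut set.
-/

theorem freeVertex.isClique_neighborSet [Finite V] {G : SimpleGraph V} {v : V}
    (hv : freeVertex G v) : G.IsClique (G.neighborSet v) := by
  obtain ⟨s, ⟨-, hs, -⟩, huniq⟩ := hv
  have hmem : ∀ x, G.Adj v x → x ∈ s := fun x hx => by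
    obtain ⟨t, hvx, ht⟩ := Finite.exists_le_maximal (p := G.IsClique) (isClique_pair.2 fun _ => hx)
    have hts : t = s := huniq t ⟨hvx (by simp), ht.1, fun u hu htu => htu.antisymm (ht.2 hu htu)⟩
    exact hts ▸ hvx (by simp)
  exact hs.subset hmem

namespace SimpleGraph

variable {G : SimpleGraph V} {v : V} {s : Set V}

/-- The second alternative for `x` (standing at `v`, jump to any neighbour) is what lets the
induction step over an occurrence of `v` in the walk. -/
theorem reachable_induce_of_walk_of_isClique_neighborSet (hv : G.IsClique (G.neighborSet v))
    {a b : V} (p : G.Walk a b) (hp : ∀ y ∈ p.support, y ∈ insert v s) (hb : b ∈ s)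
    {x : V} (hx : x ∈ s) (hxa : x = a ∨ a = v ∧ G.Adj v x) :
    (G.induce s).Reachable ⟨x, hx⟩ ⟨b, hb⟩ := by
  induction p generalizing x with
  | nil =>
    rcases hxa with rfl | ⟨rfl, hvx⟩
    · rfl
    · exact (induce_adj.2 hvx.symm).reachable
  | @cons a c b hac p ih =>
    have hp' : ∀ y ∈ p.support, y ∈ insert v s := fun y hy => hp y (by simp [hy])
    have hc : c = v ∨ c ∈ s := hp c (by simp)
    rcases hxa with rfl | ⟨rfl, hvx⟩
    · rcases hc with rfl | hc
      · exact ih hp' hb hx (.inr ⟨rfl, hac.symm⟩)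
      · exact (induce_adj.2 hac).reachable.trans (ih hp' hb hc (.inl rfl))
    · have hc : c ∈ s := hc.resolve_left hac.ne'
      by_cases hxc : x = c
      · exact ih hp' hb hx (.inl hxc)
      · have hxc' : G.Adj x c := hv hvx hac hxc
        exact (induce_adj.2 hxc').reachable.trans (ih hp' hb hc (.inl rfl))

theorem injective_connectedComponentMap_induceHomOfLE (hv : G.IsClique (G.neighborSet v))
    {t : Set V} (hst : s ⊆ t) (hts : t ⊆ insert v s) :
    Function.Injective (ConnectedComponent.map (G.induceHomOfLE hst).toHom) := by
  refine ConnectedComponent.ind₂ fun a b hab => ?_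
  obtain ⟨w⟩ := ConnectedComponent.exact hab
  have hw : ∀ y ∈ (w.map (Embedding.induce t).toHom).support, y ∈ insert v s := by
    simp only [Walk.support_map, List.mem_map]
    rintro _ ⟨y, -, rfl⟩
    exact hts y.2
  exact ConnectedComponent.sound
    (reachable_induce_of_walk_of_isClique_neighborSet hv _ hw b.2 a.2 (.inl rfl))

end SimpleGraph

theorem ncomp_le_ncomp_erase_s11 [Finite V] [DecidableEq V] {G : SimpleGraph V} {v : V}
    (hv : G.IsClique (G.neighborSet v)) (S : Finset V) : ncomp G S ≤ ncomp G (S.erase v) := by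
  have hst : {x | x ∉ S} ⊆ {x | x ∉ S.erase v} := fun x hx hxS => hx (mem_of_mem_erase hxS)
  have hts : {x | x ∉ S.erase v} ⊆ insert v {x | x ∉ S} := fun x hx => by
    by_cases hxv : x = v
    · exact .inl hxv
    · exact .inr fun hxS => hx (mem_erase.2 ⟨hxv, hxS⟩)
  exact Nat.card_le_card_of_injective _ (injective_connectedComponentMap_induceHomOfLE hv hst hts)

theorem freeVertex_not_mem_cutSet [Fintype V] [DecidableEq V] (G : SimpleGraph V)
    (v : V) (hv : freeVertex G v) :
    ∀ S : Finset V, cutSet G S → v ∉ S := by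
  rintro S (rfl | hS) hvS
  · exact absurd hvS (notMem_empty v)
  · exact (hS v hvS).not_ge (ncomp_le_ncomp_erase_s11 hv.isClique_neighborSet S)
end

section
/- Let B be a block on n ≥ 3 vertices and G obtained by attaching whiskers at k ≥ 3 vertices v_1,...,v_k, with G accessible. If some vertex w of B has degree exactly 2 in B, w is not a whiskered vertex, and w is adjacent to a whiskered (cut) vertex v, then no cut set of G \ {v} contains N_B(v). (Reason: such a cut set would contain w, but w has exactly one neighbor remaining in G \ {v}, so it cannot reconnect two components.) -/
open SimpleGraph Finset

variable {V : Type*}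

/-- If all neighbors of `w` coincide, any walk between vertices `≠ w` can avoid `w`. -/
lemma walk_avoid {X : Type*} (H : SimpleGraph X) (w : X)
    (hu : ∀ a b, H.Adj w a → H.Adj w b → a = b) :
    ∀ (n : ℕ) (x y : X) (p : H.Walk x y), p.length ≤ n → x ≠ w → y ≠ w →
      ∃ q : H.Walk x y, w ∉ q.support := by
  intro n
  induction n with
  | zero =>
    intro x y p hlen hx hy
    cases p with
    | nil => exact ⟨.nil, by simp [Ne.symm hx]⟩
    | cons h q => simp [SimpleGraph.Walk.length_cons] at hlen
  | succ n ih =>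
    intro x y p hlen hx hy
    cases p with
    | nil => exact ⟨.nil, by simp [Ne.symm hx]⟩
    | @cons _ c _ h q =>
      by_cases hc : c = w
      · subst hc
        cases q with
        | nil => exact absurd rfl hy
        | @cons _ d _ h' q' =>
          have hxd : x = d := hu x d h.symm h'
          refine ih x y (q'.copy hxd.symm rfl) ?_ hx hy
          simp only [SimpleGraph.Walk.length_copy]
          simp [SimpleGraph.Walk.length_cons] at hlen
          omega
      · obtain ⟨q₂, hq₂⟩ := ih c y q (by simp [SimpleGraph.Walk.length_cons] at hlen; omega) hc hy
        exact ⟨.cons h q₂, by simp [SimpleGraph.Walk.support_cons, Ne.symm hx, hq₂]⟩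


lemma ncomp_le_erase {X : Type*} [Fintype X] [DecidableEq X] (H : SimpleGraph X)
    (S : Finset X) (w : X) (hwS : w ∈ S)
    (hu : ∀ a b, H.Adj w a → H.Adj w b → a = b) :
    ncomp H S ≤ ncomp H (S.erase w) := by
  classical
  set A : Set X := {v | v ∉ S} with hA
  set A' : Set X := {v | v ∉ S.erase w} with hA'
  have hsub : ∀ x : X, x ∈ A → x ∈ A' := fun x hx => by
    simp only [hA', Set.mem_setOf_eq, Finset.mem_erase]
    exact fun h => hx h.2
  -- hom from induce A to induce A'
  let ι : H.induce A →g H.induce A' :=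
    ⟨fun x => ⟨x.1, hsub x.1 x.2⟩, fun {a b} hab => hab⟩
  have hinj : Function.Injective (SimpleGraph.ConnectedComponent.map ι) := by
    intro c d
    refine SimpleGraph.ConnectedComponent.ind₂ (fun a b hab => ?_) c d
    simp only [SimpleGraph.ConnectedComponent.map_mk,
      SimpleGraph.ConnectedComponent.eq] at hab ⊢
    -- hab : Reachable in induce A' between ι a, ι b; conclude reachable in induce A
    obtain ⟨p⟩ := hab
    -- w as a vertex of induce A'
    have hwA' : w ∈ A' := by simp [hA']
    set w' : A' := ⟨w, hwA'⟩ with hw'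
    have hu' : ∀ a b : A', (H.induce A').Adj w' a → (H.induce A').Adj w' b → a = b := by
      intro a b h1 h2
      exact Subtype.ext (hu a.1 b.1 h1 h2)
    have ha : ι a ≠ w' := fun h => by
      have := congrArg Subtype.val h
      exact a.2 (this ▸ hwS)
    have hb : ι b ≠ w' := fun h => by
      have := congrArg Subtype.val h
      exact b.2 (this ▸ hwS)
    obtain ⟨q, hq⟩ := walk_avoid (H.induce A') w' hu' p.length _ _ p le_rfl ha hb
    -- transfer q into induce A
    clear p
    have key : ∀ (x y : A') (q : (H.induce A').Walk x y), w' ∉ q.support →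
        ∀ (hx : x.1 ∈ A) (hy : y.1 ∈ A),
        (H.induce A).Reachable ⟨x.1, hx⟩ ⟨y.1, hy⟩ := by
      intro x y q
      induction q with
      | nil => intro _ hx hy; rfl
      | @cons x c y h q ih =>
        intro hns hx hy
        simp only [SimpleGraph.Walk.support_cons, List.mem_cons] at hns
        push_neg at hns
        have hcW : w' ∉ q.support := hns.2
        have hc : c ≠ w' := fun hcw => hcW (hcw ▸ q.start_mem_support)
        have hcA : c.1 ∈ A := by
          have : c.1 ∉ S.erase w := c.2
          simp only [Finset.mem_erase, not_and_or, not_not] at this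
          rcases this with h1 | h2
          · exact absurd (Subtype.ext h1) hc
          · exact h2
        have hadj : (H.induce A).Adj ⟨x.1, hx⟩ ⟨c.1, hcA⟩ := h
        exact (hadj.reachable).trans (ih hcW hcA hy)
    exact key _ _ q hq a.2 b.2
  exact Nat.card_le_card_of_injective _ hinj

theorem degree_two_neighbor_blocks_cutSet [Fintype V] [DecidableEq V] {k : ℕ}
    (hn : 3 ≤ Fintype.card V) (hk : 3 ≤ k)
    (B : SimpleGraph V) [DecidableRel B.Adj] (hB : isBlock B)
    (f : Fin k → V) (hf : Function.Injective f)
    (hacc : accessible (whisker B f))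
    (w : V) (hdeg : B.degree w = 2) (hw : w ∉ Set.range f)
    (i : Fin k) (hadj : B.Adj w (f i)) :
    ∀ S : Finset {x : V ⊕ Fin k // x ≠ Sum.inl (f i)},
      cutSet ((whisker B f).induce {x | x ≠ Sum.inl (f i)}) S →
      ¬ (∀ u, B.Adj (f i) u → Sum.inl u ∈ S.image Subtype.val) := by
  classical
  intro S hcut hcontain
  set G' := (whisker B f).induce {x | x ≠ Sum.inl (f i)} with hG'
  have hwfi : w ≠ f i := fun h => hw ⟨i, h.symm⟩
  have hwmem : (Sum.inl w : V ⊕ Fin k) ≠ Sum.inl (f i) := fun h =>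
    hwfi (Sum.inl.inj h)
  set w' : {x : V ⊕ Fin k // x ≠ Sum.inl (f i)} := ⟨Sum.inl w, hwmem⟩ with hw'
  -- w' ∈ S
  have hwS : w' ∈ S := by
    have := hcontain w hadj.symm
    simp only [Finset.mem_image] at this
    obtain ⟨s, hs, hsval⟩ := this
    have : s = w' := Subtype.ext hsval
    exact this ▸ hs
  -- characterize whisker adjacency at inl w
  have hadjw : ∀ y : V ⊕ Fin k, (whisker B f).Adj (Sum.inl w) y →
      ∃ b, y = Sum.inl b ∧ B.Adj w b := by
    intro y hy
    simp only [whisker, SimpleGraph.fromRel_adj] at hy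
    obtain ⟨hne, hr⟩ := hy
    cases y with
    | inl b =>
      rcases hr with h1 | h2
      · exact ⟨b, rfl, h1⟩
      · exact ⟨b, rfl, h2.symm⟩
    | inr j =>
      rcases hr with h1 | h2
      · exact absurd ⟨j, h1.symm⟩ hw
      · exact absurd h2 (by simp)
  -- neighbors of w in B other than f i are unique
  have huniq : ∀ a b : V, B.Adj w a → B.Adj w b → a ≠ f i → b ≠ f i → a = b := by
    intro a b ha hb hafi hbfi
    have hmem : ∀ c : V, B.Adj w c → c ∈ B.neighborFinset w := fun c hc => by
      simpa [SimpleGraph.mem_neighborFinset] using hc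
    have hcard : ((B.neighborFinset w).erase (f i)).card = 1 := by
      rw [Finset.card_erase_of_mem (hmem _ hadj)]
      have hdeg' : (B.neighborFinset w).card = 2 := hdeg
      omega
    obtain ⟨c, hc⟩ := Finset.card_eq_one.mp hcard
    have ha' : a ∈ (B.neighborFinset w).erase (f i) :=
      Finset.mem_erase.mpr ⟨hafi, hmem a ha⟩
    have hb' : b ∈ (B.neighborFinset w).erase (f i) :=
      Finset.mem_erase.mpr ⟨hbfi, hmem b hb⟩
    rw [hc, Finset.mem_singleton] at ha' hb'
    rw [ha', hb']
  -- uniqueness of neighbors of w' in G'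
  have hu : ∀ a b : {x : V ⊕ Fin k // x ≠ Sum.inl (f i)},
      G'.Adj w' a → G'.Adj w' b → a = b := by
    intro a b ha hb
    have ha' : (whisker B f).Adj (Sum.inl w) a.1 := ha
    have hb' : (whisker B f).Adj (Sum.inl w) b.1 := hb
    obtain ⟨ba, hba, hBa⟩ := hadjw _ ha'
    obtain ⟨bb, hbb, hBb⟩ := hadjw _ hb'
    have hafi : ba ≠ f i := fun h => a.2 (by rw [hba, h])
    have hbfi : bb ≠ f i := fun h => b.2 (by rw [hbb, h])
    have : ba = bb := huniq ba bb hBa hBb hafi hbfi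
    exact Subtype.ext (by rw [hba, hbb, this])
  -- S is nonempty, so cut set condition gives strict decrease at w'
  rcases hcut with h1 | h2
  · exact absurd (h1 ▸ hwS) (Finset.notMem_empty w')
  · have hlt := h2 w' hwS
    have hle := ncomp_le_erase G' S w' hwS hu
    omega
end
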